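/- For every coefficient vector α ∈ ℝ^{m_k}, the AA update x_{k+1} = q(x_k) + Σ_{i=1}^{m_k} α_i (q(x_k) − q(x_{k−i})) applied to the preconditioned Richardson iteration satisfies both: (1) (A q(x_k) − b) + Σ_{i=1}^{m_k} α_i ((A q(x_k) − b) − (A q(x_{k−i}) − b)) = A x_{k+1} − b (so the AAg least-squares objective vector equals the classical residual of the update), and (2) A x_{k+1} − b = H · (r̄_k − Σ_{i=1}^{m_k} α_i (r̄_{k−i} − r̄_k)), where r̄_j = A x_j − b and H = I − A P. -/
import Mathlib


open scoped RealInnerProductSpace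

/-- Matrix-vector multiplication on Euclidean space. -/
noncomputable def mulV {n : ℕ} (M : Matrix (Fin n) (Fin n) ℝ)
    (v : EuclideanSpace ℝ (Fin n)) : EuclideanSpace ℝ (Fin n) :=
  Matrix.toEuclideanLin M v

lemma mulV_add {n : ℕ} (M : Matrix (Fin n) (Fin n) ℝ) (u v : EuclideanSpace ℝ (Fin n)) :
    mulV M (u + v) = mulV M u + mulV M v := map_add _ _ _

lemma mulV_sub {n : ℕ} (M : Matrix (Fin n) (Fin n) ℝ) (u v : EuclideanSpace ℝ (Fin n)) :
    mulV M (u - v) = mulV M u - mulV M v := map_sub _ _ _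

lemma mulV_smul {n : ℕ} (M : Matrix (Fin n) (Fin n) ℝ) (c : ℝ) (v : EuclideanSpace ℝ (Fin n)) :
    mulV M (c • v) = c • mulV M v := map_smul _ _ _

lemma mulV_sum {n : ℕ} (M : Matrix (Fin n) (Fin n) ℝ) {ι : Type*} (s : Finset ι)
    (f : ι → EuclideanSpace ℝ (Fin n)) :
    mulV M (∑ i ∈ s, f i) = ∑ i ∈ s, mulV M (f i) := map_sum _ _ _

lemma mulV_one {n : ℕ} (v : EuclideanSpace ℝ (Fin n)) : mulV 1 v = v := by
  simp [mulV, Matrix.toEuclideanLin]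

lemma mulV_mul {n : ℕ} (M N : Matrix (Fin n) (Fin n) ℝ) (v : EuclideanSpace ℝ (Fin n)) :
    mulV (M * N) v = mulV M (mulV N v) := by
  simp [mulV, Matrix.toEuclideanLin, Matrix.mulVec_mulVec]

/-- Matrix subtraction acts pointwise. -/
lemma mulV_matSub {n : ℕ} (M N : Matrix (Fin n) (Fin n) ℝ) (v : EuclideanSpace ℝ (Fin n)) :
    mulV (M - N) v = mulV M v - mulV N v := by
  simp [mulV, Matrix.toEuclideanLin, Matrix.sub_mulVec]

/-- Residual of Richardson update: A q(y) - b = H (A y - b). -/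
lemma residual_q {n : ℕ} (A P : Matrix (Fin n) (Fin n) ℝ) (b y : EuclideanSpace ℝ (Fin n)) :
    mulV A (y + mulV P (b - mulV A y)) - b
      = mulV (1 - A * P) (mulV A y - b) := by
  simp only [mulV_matSub, mulV_one, mulV_mul, mulV_sub, mulV_add]
  abel

/-- AAg least-squares objective equals the classical residual of the AA update. -/
theorem stmt_11 {n : ℕ} (A P : Matrix (Fin n) (Fin n) ℝ)
    (hA : IsUnit A.det) (hP : IsUnit P.det)
    (b : EuclideanSpace ℝ (Fin n))
    (q rb : EuclideanSpace ℝ (Fin n) → EuclideanSpace ℝ (Fin n))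
    (hq : ∀ y, q y = y + mulV P (b - mulV A y))
    (hrb : ∀ y, rb y = mulV A y - b)
    (H : Matrix (Fin n) (Fin n) ℝ) (hH : H = 1 - A * P)
    (k m : ℕ) (hm : m ≤ k)
    (x : ℕ → EuclideanSpace ℝ (Fin n))
    (α : ℕ → ℝ)
    (xk1 : EuclideanSpace ℝ (Fin n))
    (hx : xk1 = q (x k) + ∑ i ∈ Finset.Icc 1 m, α i • (q (x k) - q (x (k - i)))) :
    (mulV A (q (x k)) - b) + ∑ i ∈ Finset.Icc 1 m,
        α i • ((mulV A (q (x k)) - b) - (mulV A (q (x (k - i))) - b)) = mulV A xk1 - b ∧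
    mulV A xk1 - b =
      mulV H (rb (x k) - ∑ i ∈ Finset.Icc 1 m, α i • (rb (x (k - i)) - rb (x k))) := by
  have hres : ∀ y, mulV A (q y) - b = mulV H (rb y) := by
    intro y; rw [hq, hrb, hH, residual_q]
  have h1 : (mulV A (q (x k)) - b) + ∑ i ∈ Finset.Icc 1 m,
      α i • ((mulV A (q (x k)) - b) - (mulV A (q (x (k - i))) - b)) = mulV A xk1 - b := by
    rw [hx, mulV_add, mulV_sum]
    simp only [mulV_smul, mulV_sub, sub_sub_sub_cancel_right]
    abel
  refine ⟨h1, ?_⟩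
  rw [← h1]
  simp only [hres, mulV_sub, mulV_sum, mulV_smul, smul_sub, Finset.sum_sub_distrib]
  abel
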